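/- (Carleson embedding over principal sets.) Let 1<p<∞ with conjugate exponent p' and let h ∈ 𝓛⁺ with ∫_Ω h^p dμ < ∞. Let (P_n)_{n∈ℕ} be a countable family of measurable sets together with indices i_n ∈ ℤ and integers k_n ∈ ℤ, and let (E_n)_{n∈ℕ} be pairwise disjoint measurable sets with E_n ⊆ P_n, such that for every n: (i) P_n ∈ 𝓕_{i_n}; (ii) χ_{P_n} ≤ 2 𝔼_{i_n}(χ_{E_n}) μ-a.e. on P_n; (iii) 2^{k_n - 1} < 𝔼_{i_n}(h) μ-a.e. on P_n. Then Σ_n μ(P_n) 2^{p(k_n - 1)} ≤ 2 (p')^p ∫_Ω h^p dμ. -/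

import Mathlib

/-!
The maximal function `M = sup_{j ∈ s} 𝔼_j h` of finitely many conditional expectations satisfies
Doob's inequality in the strong weak-type form `t μ{M > t} ≤ ∫_{M > t} h`: split `{M > t}` into
the pieces `{𝔼_j h > t}` not yet covered by smaller indices, which are `𝓕_j`-measurable. The
layer cake formula for `μ` and for `h μ` then gives `∫ M^p ≤ p' ∫ h M^(p-1)`, and Hölder gives
`∫ M^p ≤ (p')^p ∫ h^p`.

On a principal set, `2^{p(k-1)} χ_P ≤ 2 χ_P (𝔼_i h)^p 𝔼_i(χ_E)`, and the conditional expectation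
can be moved from `χ_E` to the `𝓕_i`-measurable factor, so `μ(P) 2^{p(k-1)} ≤ 2 ∫_E (𝔼_i h)^p`.
The `E_n` are disjoint, so every partial sum is bounded by `2 ∫ M^p`.
-/

open MeasureTheory Set ENNReal

section CondExp

variable {Ω : Type*} {m m₀ : MeasurableSpace Ω} {μ : Measure Ω} {f : Ω → ℝ}

theorem setLIntegral_ofReal_condExp (hm : m ≤ m₀) [SigmaFinite (μ.trim hm)]
    (hf : Integrable f μ) (hf₀ : 0 ≤ᵐ[μ] f) {s : Set Ω} (hs : MeasurableSet[m] s) :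
    ∫⁻ x in s, ENNReal.ofReal (μ[f|m] x) ∂μ = ∫⁻ x in s, ENNReal.ofReal (f x) ∂μ := by
  rw [← ofReal_integral_eq_lintegral_ofReal integrable_condExp.integrableOn
      (ae_restrict_of_ae (condExp_nonneg hf₀)),
    ← ofReal_integral_eq_lintegral_ofReal hf.integrableOn (ae_restrict_of_ae hf₀),
    setIntegral_condExp hm hf hs]

theorem lintegral_mul_ofReal_condExp (hm : m ≤ m₀) [SigmaFinite (μ.trim hm)]
    (hf : Integrable f μ) (hf₀ : 0 ≤ᵐ[μ] f) {W : Ω → ℝ≥0∞} (hW : Measurable[m] W) :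
    ∫⁻ x, W x * ENNReal.ofReal (μ[f|m] x) ∂μ = ∫⁻ x, W x * ENNReal.ofReal (f x) ∂μ := by
  have htrim : (μ.withDensity fun x => ENNReal.ofReal (μ[f|m] x)).trim hm
      = (μ.withDensity fun x => ENNReal.ofReal (f x)).trim hm := by
    refine @Measure.ext Ω m _ _ fun s hs => ?_
    rw [trim_measurableSet_eq hm hs, trim_measurableSet_eq hm hs,
      withDensity_apply _ (hm s hs), withDensity_apply _ (hm s hs),
      setLIntegral_ofReal_condExp hm hf hf₀ hs]
  have hdens : ∀ g : Ω → ℝ, AEMeasurable g μ →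
      ∫⁻ x, W x * ENNReal.ofReal (g x) ∂μ
        = ∫⁻ x, W x ∂((μ.withDensity fun x => ENNReal.ofReal (g x)).trim hm) := by
    intro g hg
    rw [lintegral_trim hm hW, lintegral_withDensity_eq_lintegral_mul₀ hg.ennreal_ofReal
      (hW.mono hm le_rfl).aemeasurable]
    simp only [Pi.mul_apply, mul_comm]
  rw [hdens _ integrable_condExp.aemeasurable, hdens _ hf.aemeasurable, htrim]

theorem mul_measure_le_setLIntegral_of_le_condExp (hm : m ≤ m₀) [SigmaFinite (μ.trim hm)]
    (hf : Integrable f μ) (hf₀ : 0 ≤ᵐ[μ] f) {s : Set Ω} (hs : MeasurableSet[m] s) {t : ℝ≥0∞}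
    (hlevel : ∀ᵐ x ∂μ, x ∈ s → t ≤ ENNReal.ofReal (μ[f|m] x)) :
    t * μ s ≤ ∫⁻ x in s, ENNReal.ofReal (f x) ∂μ := by
  rw [← setLIntegral_ofReal_condExp hm hf hf₀ hs, ← setLIntegral_const]
  exact setLIntegral_mono_ae
    (stronglyMeasurable_condExp.measurable.mono hm le_rfl).ennreal_ofReal.aemeasurable hlevel

theorem measure_lt_top_of_le_condExp (hm : m ≤ m₀) [SigmaFinite (μ.trim hm)]
    (hf : Integrable f μ) (hf₀ : 0 ≤ᵐ[μ] f) {s : Set Ω} (hs : MeasurableSet[m] s) {c : ℝ}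
    (hc : 0 < c) (hlevel : ∀ᵐ x ∂μ, x ∈ s → c ≤ μ[f|m] x) :
    μ s < ∞ := by
  refine lt_top_of_mul_ne_top_right (ne_top_of_le_ne_top hf.lintegral_lt_top.ne ?_)
    (ofReal_pos.2 hc).ne'
  exact (mul_measure_le_setLIntegral_of_le_condExp hm hf hf₀ hs
    (hlevel.mono fun x hx hxs => ofReal_le_ofReal (hx hxs))).trans (setLIntegral_le_lintegral _ _)

end CondExp

section WeakType

variable {Ω : Type*} {m : MeasurableSpace Ω} {μ : Measure Ω}

theorem lintegral_rpow_eq_lintegral_meas_ofReal_lt_mul {F : Ω → ℝ≥0∞} (hF : AEMeasurable F μ)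
    (hF_fin : ∀ᵐ x ∂μ, F x ≠ ∞) {p : ℝ} (hp : 0 < p) :
    ∫⁻ x, F x ^ p ∂μ = ENNReal.ofReal p *
      ∫⁻ t in Ioi 0, μ {x | ENNReal.ofReal t < F x} * ENNReal.ofReal (t ^ (p - 1)) := by
  have hpow : ∫⁻ x, F x ^ p ∂μ = ∫⁻ x, ENNReal.ofReal ((F x).toReal ^ p) ∂μ :=
    lintegral_congr_ae <| hF_fin.mono fun x hx => by
      show F x ^ p = ENNReal.ofReal ((F x).toReal ^ p)
      rw [← ofReal_rpow_of_nonneg toReal_nonneg hp.le, ofReal_toReal hx]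
  have hlevel : ∀ t : ℝ, 0 ≤ t →
      μ {x | ENNReal.ofReal t < F x} = μ {x | t < (F x).toReal} := fun t ht =>
    measure_congr <| hF_fin.mono fun x hx => propext (ofReal_lt_iff_lt_toReal ht hx)
  rw [hpow, lintegral_rpow_eq_lintegral_meas_lt_mul μ (ae_of_all _ fun _ => toReal_nonneg)
    hF.ennreal_toReal hp]
  congr 1
  exact setLIntegral_congr_fun measurableSet_Ioi fun t ht => by rw [hlevel t (le_of_lt ht)]

theorem lintegral_rpow_le_mul_lintegral_mul_rpow_sub_one {p : ℝ} (hp : 1 < p)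
    {F g : Ω → ℝ≥0∞} (hF : Measurable F) (hg : AEMeasurable g μ) (hF_fin : ∀ᵐ x ∂μ, F x ≠ ∞)
    (hweak : ∀ t : ℝ≥0∞, t * μ {x | t < F x} ≤ ∫⁻ x in {x | t < F x}, g x ∂μ) :
    ∫⁻ x, F x ^ p ∂μ ≤ ENNReal.ofReal (p / (p - 1)) * ∫⁻ x, g x * F x ^ (p - 1) ∂μ := by
  set ν := μ.withDensity g
  have hlevel : ∀ t : ℝ, 0 < t →
      μ {x | ENNReal.ofReal t < F x} * ENNReal.ofReal (t ^ (p - 1))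
        ≤ ν {x | ENNReal.ofReal t < F x} * ENNReal.ofReal (t ^ (p - 1 - 1)) := by
    intro t ht
    have hsplit : ENNReal.ofReal (t ^ (p - 1))
        = ENNReal.ofReal t * ENNReal.ofReal (t ^ (p - 1 - 1)) := by
      rw [← ofReal_mul ht.le, ← Real.rpow_one_add' ht.le (by linarith)]
      ring_nf
    rw [withDensity_apply _ (measurableSet_lt measurable_const hF), hsplit, ← mul_assoc,
      mul_comm (μ _)]
    exact mul_le_mul_left (hweak _) _
  have hν : ∫⁻ x, g x * F x ^ (p - 1) ∂μ = ENNReal.ofReal (p - 1) *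
      ∫⁻ t in Ioi 0, ν {x | ENNReal.ofReal t < F x} * ENNReal.ofReal (t ^ (p - 1 - 1)) := by
    rw [← lintegral_rpow_eq_lintegral_meas_ofReal_lt_mul hF.aemeasurable
      (withDensity_absolutelyContinuous μ g |>.ae_le hF_fin) (by linarith),
      lintegral_withDensity_eq_lintegral_mul₀ hg (hF.pow_const _).aemeasurable]
    rfl
  calc ∫⁻ x, F x ^ p ∂μ
      = ENNReal.ofReal p *
          ∫⁻ t in Ioi 0, μ {x | ENNReal.ofReal t < F x} * ENNReal.ofReal (t ^ (p - 1)) :=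
        lintegral_rpow_eq_lintegral_meas_ofReal_lt_mul hF.aemeasurable hF_fin (by linarith)
    _ ≤ ENNReal.ofReal p *
          ∫⁻ t in Ioi 0, ν {x | ENNReal.ofReal t < F x} * ENNReal.ofReal (t ^ (p - 1 - 1)) :=
        mul_le_mul_right (setLIntegral_mono' measurableSet_Ioi hlevel) _
    _ = ENNReal.ofReal (p / (p - 1)) * ∫⁻ x, g x * F x ^ (p - 1) ∂μ := by
        rw [hν, ← mul_assoc, ← ofReal_mul (div_nonneg (by linarith) (by linarith)),
          div_mul_cancel₀ _ (by linarith)]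

theorem le_rpow_of_le_mul_rpow_one_div {X a : ℝ≥0∞} {p q : ℝ} (hpq : p.HolderConjugate q)
    (hX : X ≠ ∞) (h : X ≤ a * X ^ (1 / q)) : X ≤ a ^ p := by
  rcases eq_or_ne X 0 with rfl | hX₀
  · simp
  have hsplit : X = X ^ (1 / p) * X ^ (1 / q) := by
    rw [← rpow_add _ _ hX₀ hX, one_div, one_div, hpq.inv_add_inv_eq_one, rpow_one]
  have hroot : X ^ (1 / p) ≤ a := by
    refine (ENNReal.mul_le_mul_iff_left ?_ ?_).1 (by rwa [← hsplit])
    · exact (rpow_pos (pos_iff_ne_zero.2 hX₀) hX).ne'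
    · exact rpow_ne_top_of_nonneg (by simp [hpq.symm.nonneg]) hX
  calc X = (X ^ (1 / p)) ^ p := by rw [← rpow_mul, one_div_mul_cancel hpq.ne_zero, rpow_one]
    _ ≤ a ^ p := rpow_le_rpow hroot hpq.nonneg

theorem lintegral_rpow_le_of_mul_meas_lt_le {p : ℝ} (hp : 1 < p)
    {F g : Ω → ℝ≥0∞} (hF : Measurable F) (hg : AEMeasurable g μ)
    (hF_fin : ∫⁻ x, F x ^ p ∂μ ≠ ∞)
    (hweak : ∀ t : ℝ≥0∞, t * μ {x | t < F x} ≤ ∫⁻ x in {x | t < F x}, g x ∂μ) :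
    ∫⁻ x, F x ^ p ∂μ ≤ ENNReal.ofReal (p / (p - 1)) ^ p * ∫⁻ x, g x ^ p ∂μ := by
  have hpq : p.HolderConjugate (p / (p - 1)) := .conjExponent hp
  have hF_ae : ∀ᵐ x ∂μ, F x ≠ ∞ := (ae_lt_top' (hF.pow_const p).aemeasurable hF_fin).mono
    fun x hx => by simpa [rpow_eq_top_iff, hpq.pos, hpq.pos.not_gt] using hx.ne
  have hmain := calc ∫⁻ x, F x ^ p ∂μ
      ≤ ENNReal.ofReal (p / (p - 1)) * ∫⁻ x, g x * F x ^ (p - 1) ∂μ :=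
        lintegral_rpow_le_mul_lintegral_mul_rpow_sub_one hp hF hg hF_ae hweak
    _ ≤ ENNReal.ofReal (p / (p - 1)) * ((∫⁻ x, g x ^ p ∂μ) ^ (1 / p) *
          (∫⁻ x, (F x ^ (p - 1)) ^ (p / (p - 1)) ∂μ) ^ (1 / (p / (p - 1)))) := by
        gcongr
        exact ENNReal.lintegral_mul_le_Lp_mul_Lq μ hpq hg (hF.pow_const _).aemeasurable
    _ = ENNReal.ofReal (p / (p - 1)) * (∫⁻ x, g x ^ p ∂μ) ^ (1 / p) *
          (∫⁻ x, F x ^ p ∂μ) ^ (1 / (p / (p - 1))) := by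
        simp_rw [← rpow_mul, hpq.sub_one_mul_conj, mul_assoc]
  refine (le_rpow_of_le_mul_rpow_one_div hpq hF_fin hmain).trans_eq ?_
  rw [mul_rpow_of_nonneg _ _ hpq.nonneg, ← rpow_mul, one_div_mul_cancel hpq.ne_zero, rpow_one]

end WeakType

section Maximal

variable {Ω ι : Type*} {m : MeasurableSpace Ω} {μ : Measure Ω}

noncomputable def maximalCondExp [Preorder ι] (μ : Measure Ω) (ℱ : Filtration ι m)
    (s : Finset ι) (f : Ω → ℝ) (x : Ω) : ℝ≥0∞ :=
  s.sup fun j => ENNReal.ofReal (μ[f|ℱ j] x)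

theorem measurable_maximalCondExp [Preorder ι] {ℱ : Filtration ι m} {s : Finset ι} {f : Ω → ℝ}
    {m' : MeasurableSpace Ω} (hs : ∀ j ∈ s, ℱ j ≤ m') :
    Measurable[m'] (maximalCondExp μ ℱ s f) := by
  have : maximalCondExp μ ℱ s f = s.sup fun j x => ENNReal.ofReal (μ[f|ℱ j] x) := by
    ext x; simp [maximalCondExp, Finset.sup_apply]
  rw [this]
  exact Finset.sup_induction (p := fun g => Measurable[m'] g) measurable_const
    (fun _ h₁ _ h₂ => h₁.sup h₂) fun j hj =>
      (stronglyMeasurable_condExp.measurable.mono (hs j hj) le_rfl).ennreal_ofReal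

theorem mul_meas_lt_maximalCondExp_le [LinearOrder ι] {ℱ : Filtration ι m}
    [SigmaFiniteFiltration μ ℱ] {f : Ω → ℝ} (hf : Integrable f μ) (hf₀ : 0 ≤ᵐ[μ] f)
    (s : Finset ι) (t : ℝ≥0∞) :
    t * μ {x | t < maximalCondExp μ ℱ s f x}
      ≤ ∫⁻ x in {x | t < maximalCondExp μ ℱ s f x}, ENNReal.ofReal (f x) ∂μ := by
  induction s using Finset.induction_on_max with
  | empty => simp [maximalCondExp]
  | insert a s hlt IH =>
    set U := {x | t < maximalCondExp μ ℱ s f x}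
    have hU : MeasurableSet[ℱ a] U := measurableSet_lt measurable_const
      (measurable_maximalCondExp fun j hj => ℱ.mono (hlt j hj).le)
    set B := {x | t < ENNReal.ofReal (μ[f|ℱ a] x)} \ U
    have hB : MeasurableSet[ℱ a] B := (measurableSet_lt measurable_const
      stronglyMeasurable_condExp.measurable.ennreal_ofReal).diff hU
    have hunion : {x | t < maximalCondExp μ ℱ (insert a s) f x} = U ∪ B := by
      ext x
      simp only [maximalCondExp, Finset.sup_insert, lt_sup_iff, U, B, mem_ofPred_eq, mem_union,
        mem_sdiff]
      tauto
    have hB_le : t * μ B ≤ ∫⁻ x in B, ENNReal.ofReal (f x) ∂μ :=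
      mul_measure_le_setLIntegral_of_le_condExp (ℱ.le a) hf hf₀ hB
        (ae_of_all _ fun x hx => hx.1.le)
    rw [hunion, measure_union disjoint_sdiff_right (ℱ.le a _ hB), mul_add,
      lintegral_union (ℱ.le a _ hB) disjoint_sdiff_right]
    exact add_le_add IH hB_le

theorem lintegral_ofReal_condExp_rpow_ne_top {m' : MeasurableSpace Ω} {f : Ω → ℝ} {p : ℝ}
    (hp : 1 ≤ p) (hf : MemLp f (ENNReal.ofReal p) μ) :
    ∫⁻ x, ENNReal.ofReal (μ[f|m'] x) ^ p ∂μ ≠ ∞ := by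
  have hlt := lintegral_rpow_enorm_lt_top_of_eLpNorm_lt_top (by simp; linarith) ofReal_ne_top
    (hf.condExp (m := m') (one_le_ofReal.2 hp)).eLpNorm_lt_top
  rw [toReal_ofReal (by linarith)] at hlt
  exact ne_top_of_le_ne_top hlt.ne
    (lintegral_mono fun x => rpow_le_rpow (Real.ofReal_le_enorm _) (by linarith))

theorem lintegral_maximalCondExp_rpow_ne_top [Preorder ι] {ℱ : Filtration ι m} {f : Ω → ℝ}
    {p : ℝ} (hp : 1 ≤ p) (hf : MemLp f (ENNReal.ofReal p) μ) (s : Finset ι) :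
    ∫⁻ x, maximalCondExp μ ℱ s f x ^ p ∂μ ≠ ∞ := by
  have hpointwise : ∀ x, maximalCondExp μ ℱ s f x ^ p
      ≤ ∑ j ∈ s, ENNReal.ofReal (μ[f|ℱ j] x) ^ p := by
    intro x
    rw [maximalCondExp, Finset.apply_sup_eq_sup_comp (· ^ p)
      (fun y z => (monotone_rpow_of_nonneg (by linarith)).map_sup y z)
      (zero_rpow_of_pos (by linarith))]
    exact Finset.sup_le fun j hj => Finset.single_le_sum (fun _ _ => zero_le) hj
  refine ne_top_of_le_ne_top ?_ (lintegral_mono hpointwise)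
  rw [lintegral_finsetSum _ fun j _ =>
    (stronglyMeasurable_condExp.measurable.mono (ℱ.le j) le_rfl).ennreal_ofReal.pow_const p]
  exact ENNReal.sum_ne_top.2 fun j _ => lintegral_ofReal_condExp_rpow_ne_top hp hf

theorem lintegral_maximalCondExp_rpow_le [LinearOrder ι] {ℱ : Filtration ι m}
    [SigmaFiniteFiltration μ ℱ] {f : Ω → ℝ} {p : ℝ} (hp : 1 < p) (hf : Integrable f μ)
    (hf₀ : 0 ≤ᵐ[μ] f) (hfp : MemLp f (ENNReal.ofReal p) μ) (s : Finset ι) :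
    ∫⁻ x, maximalCondExp μ ℱ s f x ^ p ∂μ
      ≤ ENNReal.ofReal (p / (p - 1)) ^ p * ∫⁻ x, ENNReal.ofReal (f x) ^ p ∂μ :=
  lintegral_rpow_le_of_mul_meas_lt_le hp (measurable_maximalCondExp fun j _ => ℱ.le j)
    hf.aemeasurable.ennreal_ofReal (lintegral_maximalCondExp_rpow_ne_top hp.le hfp s)
    (mul_meas_lt_maximalCondExp_le hf hf₀ s)

end Maximal

theorem measure_mul_rpow_le_two_mul_setLIntegral_condExp_rpow {Ω : Type*}
    {m m₀ : MeasurableSpace Ω} {μ : Measure Ω} (hm : m ≤ m₀) [SigmaFinite (μ.trim hm)]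
    {f : Ω → ℝ} (hf : Integrable f μ) (hf₀ : 0 ≤ᵐ[μ] f) {p : ℝ} (hp : 0 ≤ p) {P E : Set Ω}
    (hP : MeasurableSet[m] P) (hE : MeasurableSet E) (hEP : E ⊆ P) {c : ℝ} (hc : 0 < c)
    (hsparse : ∀ᵐ x ∂μ, x ∈ P → (1 : ℝ) ≤ 2 * (μ[E.indicator (fun _ => (1 : ℝ))|m]) x)
    (hlevel : ∀ᵐ x ∂μ, x ∈ P → c ≤ μ[f|m] x) :
    μ P * ENNReal.ofReal (c ^ p) ≤ 2 * ∫⁻ x in E, ENNReal.ofReal (μ[f|m] x) ^ p ∂μ := by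
  have hχ : Integrable (E.indicator fun _ => (1 : ℝ)) μ :=
    (integrable_indicator_iff hE).2 (integrableOn_const ((measure_mono hEP).trans_lt
      (measure_lt_top_of_le_condExp hm hf hf₀ hP hc hlevel)).ne)
  set W := P.indicator fun x => ENNReal.ofReal (μ[f|m] x) ^ p
  have hW : Measurable[m] W :=
    (stronglyMeasurable_condExp.measurable.ennreal_ofReal.pow_const p).indicator hP
  have hpointwise : ∀ᵐ x ∂μ, P.indicator (fun _ => ENNReal.ofReal (c ^ p)) x
      ≤ 2 * (W x * ENNReal.ofReal (μ[E.indicator (fun _ => (1 : ℝ))|m] x)) := by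
    filter_upwards [hsparse, hlevel] with x hs hl
    by_cases hxP : x ∈ P
    · have hW_ge : ENNReal.ofReal (c ^ p) ≤ W x := by
        simp only [W, indicator_of_mem hxP, ← ofReal_rpow_of_pos hc]
        exact rpow_le_rpow (ofReal_le_ofReal (hl hxP)) hp
      have h_two : 1 ≤ 2 * ENNReal.ofReal (μ[E.indicator (fun _ => (1 : ℝ))|m] x) := by
        simpa [ofReal_mul] using ofReal_le_ofReal (hs hxP)
      calc P.indicator (fun _ => ENNReal.ofReal (c ^ p)) x = 1 * ENNReal.ofReal (c ^ p) := by
            rw [indicator_of_mem hxP, one_mul]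
        _ ≤ 2 * ENNReal.ofReal (μ[E.indicator (fun _ => (1 : ℝ))|m] x) * W x :=
          mul_le_mul' h_two hW_ge
        _ = _ := by ring
    · simp [indicator_of_notMem hxP]
  have hWE : ∀ x, W x * ENNReal.ofReal (E.indicator (fun _ => (1 : ℝ)) x)
      = E.indicator (fun x => ENNReal.ofReal (μ[f|m] x) ^ p) x := by
    intro x
    by_cases hxE : x ∈ E
    · simp [W, indicator_of_mem hxE, indicator_of_mem (hEP hxE)]
    · simp [indicator_of_notMem hxE]
  calc μ P * ENNReal.ofReal (c ^ p)
      = ∫⁻ x, P.indicator (fun _ => ENNReal.ofReal (c ^ p)) x ∂μ := by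
        rw [lintegral_indicator_const (hm P hP), mul_comm]
    _ ≤ ∫⁻ x, 2 * (W x * ENNReal.ofReal (μ[E.indicator (fun _ => (1 : ℝ))|m] x)) ∂μ :=
        lintegral_mono_ae hpointwise
    _ = 2 * ∫⁻ x in E, ENNReal.ofReal (μ[f|m] x) ^ p ∂μ := by
        rw [lintegral_const_mul' _ _ ofNat_ne_top,
          lintegral_mul_ofReal_condExp hm hχ (ae_of_all _ (indicator_nonneg (by simp))) hW,
          lintegral_congr hWE, lintegral_indicator hE]

theorem memLp_ofReal_of_integrable_rpow {Ω : Type*} {m : MeasurableSpace Ω} {μ : Measure Ω}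
    {f : Ω → ℝ} (hf : AEStronglyMeasurable f μ) (hf₀ : 0 ≤ f) {p : ℝ} (hp : 0 < p)
    (hfp : Integrable (fun x => f x ^ p) μ) : MemLp f (ENNReal.ofReal p) μ := by
  refine (integrable_norm_rpow_iff hf (by simpa using hp) ofReal_ne_top).1 ?_
  simpa [toReal_ofReal hp.le, Real.norm_of_nonneg (hf₀ _)] using hfp

theorem lintegral_ofReal_rpow_eq_ofReal_integral {Ω : Type*} {m : MeasurableSpace Ω}
    {μ : Measure Ω} {f : Ω → ℝ} (hf₀ : 0 ≤ f) {p : ℝ} (hp : 0 ≤ p)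
    (hfp : Integrable (fun x => f x ^ p) μ) :
    ∫⁻ x, ENNReal.ofReal (f x) ^ p ∂μ = ENNReal.ofReal (∫ x, f x ^ p ∂μ) := by
  rw [ofReal_integral_eq_lintegral_ofReal hfp (ae_of_all _ fun x => Real.rpow_nonneg (hf₀ x) p)]
  exact lintegral_congr fun x => ofReal_rpow_of_nonneg (hf₀ x) hp

theorem carleson_embedding_principal_sets_general
    {Ω : Type*} {m : MeasurableSpace Ω} {μ : Measure Ω}
    (ℱ : Filtration ℤ m) [SigmaFiniteFiltration μ ℱ]
    (p : ℝ) (hp : 1 < p)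
    (h : Ω → ℝ) (hh_nonneg : 0 ≤ h) (hh_int : Integrable h μ)
    (hhp_int : Integrable (fun x => h x ^ p) μ)
    (P E : ℕ → Set Ω) (i : ℕ → ℤ) (k : ℕ → ℤ)
    (hP_meas : ∀ n, MeasurableSet[ℱ (i n)] (P n))
    (hE_meas : ∀ n, MeasurableSet (E n))
    (hE_sub : ∀ n, E n ⊆ P n)
    (hE_disj : Pairwise (Function.onFun Disjoint E))
    (hsparse : ∀ n, ∀ᵐ x ∂μ, x ∈ P n →
      (1 : ℝ) ≤ 2 * (μ[(E n).indicator (fun _ => (1 : ℝ))|ℱ (i n)]) x)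
    (hlevel : ∀ n, ∀ᵐ x ∂μ, x ∈ P n →
      (2 : ℝ) ^ ((k n : ℝ) - 1) < (μ[h|ℱ (i n)]) x) :
    ∑' n : ℕ, μ (P n) * ENNReal.ofReal ((2 : ℝ) ^ (p * ((k n : ℝ) - 1)))
      ≤ ENNReal.ofReal (2 * (p / (p - 1)) ^ p * ∫ x, h x ^ p ∂μ) := by
  have hp₀ : 0 < p := by linarith
  have hh₀ : 0 ≤ᵐ[μ] h := ae_of_all _ hh_nonneg
  have hprincipal : ∀ n, μ (P n) * ENNReal.ofReal ((2 : ℝ) ^ (p * ((k n : ℝ) - 1)))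
      ≤ 2 * ∫⁻ x in E n, ENNReal.ofReal (μ[h|ℱ (i n)] x) ^ p ∂μ := fun n => by
    rw [mul_comm p, Real.rpow_mul zero_le_two]
    exact measure_mul_rpow_le_two_mul_setLIntegral_condExp_rpow (ℱ.le (i n)) hh_int hh₀ hp₀.le
      (hP_meas n) (hE_meas n) (hE_sub n) (by positivity) (hsparse n)
      ((hlevel n).mono fun x hx hxP => (hx hxP).le)
  refine tsum_le_of_sum_range_le fun N => ?_
  set M := maximalCondExp μ ℱ ((Finset.range N).image i) h
  calc ∑ n ∈ Finset.range N, μ (P n) * ENNReal.ofReal ((2 : ℝ) ^ (p * ((k n : ℝ) - 1)))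
      ≤ ∑ n ∈ Finset.range N, 2 * ∫⁻ x in E n, M x ^ p ∂μ := by
        refine Finset.sum_le_sum fun n hn => (hprincipal n).trans ?_
        gcongr with x
        exact Finset.le_sup (f := fun j => ENNReal.ofReal (μ[h|ℱ j] x))
          (Finset.mem_image_of_mem i hn)
    _ = 2 * ∫⁻ x in ⋃ n ∈ Finset.range N, E n, M x ^ p ∂μ := by
        rw [← Finset.mul_sum, lintegral_biUnion_finset (fun _ _ _ _ hab => hE_disj hab)
          fun n _ => hE_meas n]
    _ ≤ 2 * ∫⁻ x, M x ^ p ∂μ := mul_le_mul_right (setLIntegral_le_lintegral _ _) _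
    _ ≤ 2 * (ENNReal.ofReal (p / (p - 1)) ^ p * ∫⁻ x, ENNReal.ofReal (h x) ^ p ∂μ) :=
        mul_le_mul_right (lintegral_maximalCondExp_rpow_le hp hh_int hh₀
          (memLp_ofReal_of_integrable_rpow hh_int.1 hh_nonneg hp₀ hhp_int) _) _
    _ = ENNReal.ofReal (2 * (p / (p - 1)) ^ p * ∫ x, h x ^ p ∂μ) := by
        rw [lintegral_ofReal_rpow_eq_ofReal_integral hh_nonneg hp₀.le hhp_int,
          ofReal_mul (by positivity), ofReal_mul zero_le_two, ofReal_ofNat,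
          ofReal_rpow_of_nonneg (by positivity) hp₀.le, mul_assoc]

/-- **Carleson embedding over principal sets** (Lemma 3.2).  If `(Pₙ)` is a countable
family of sets with indices `iₙ`, levels `kₙ` and pairwise disjoint subsets `Eₙ ⊆ Pₙ`
satisfying the conditional sparsity `χ_{Pₙ} ≤ 2 𝔼_{iₙ}(χ_{Eₙ})` a.e. on `Pₙ` and the
level condition `2^{kₙ-1} < 𝔼_{iₙ}(h)` a.e. on `Pₙ`, then
`Σₙ μ(Pₙ) 2^{p(kₙ-1)} ≤ 2 (p')^p ∫ h^p dμ`. -/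
theorem carleson_embedding_principal_sets
    {Ω : Type*} {m : MeasurableSpace Ω} {μ : Measure Ω} [SigmaFinite μ]
    (ℱ : Filtration ℤ m) [SigmaFiniteFiltration μ ℱ]
    (p : ℝ) (hp : 1 < p)
    (h : Ω → ℝ) (hh_nonneg : 0 ≤ h) (hh_meas : Measurable h) (hh_int : Integrable h μ)
    (hhp_int : Integrable (fun x => h x ^ p) μ)
    (P E : ℕ → Set Ω) (i : ℕ → ℤ) (k : ℕ → ℤ)
    (hP_meas : ∀ n, MeasurableSet[ℱ (i n)] (P n))
    (hE_meas : ∀ n, MeasurableSet (E n))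
    (hE_sub : ∀ n, E n ⊆ P n)
    (hE_disj : Pairwise (Function.onFun Disjoint E))
    (hsparse : ∀ n, ∀ᵐ x ∂μ, x ∈ P n →
      (1 : ℝ) ≤ 2 * (μ[(E n).indicator (fun _ => (1 : ℝ))|ℱ (i n)]) x)
    (hlevel : ∀ n, ∀ᵐ x ∂μ, x ∈ P n →
      (2 : ℝ) ^ ((k n : ℝ) - 1) < (μ[h|ℱ (i n)]) x) :
    ∑' n : ℕ, μ (P n) * ENNReal.ofReal ((2 : ℝ) ^ (p * ((k n : ℝ) - 1)))
      ≤ ENNReal.ofReal (2 * (p / (p - 1)) ^ p * ∫ x, h x ^ p ∂μ) :=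
  carleson_embedding_principal_sets_general ℱ p hp h hh_nonneg hh_int hhp_int P E i k hP_meas
    hE_meas hE_sub hE_disj hsparse hlevel
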